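/- arXiv:math/0305108 — 2 statements merged into one kernel-verified Lean document; each statement's English description precedes it below -/
import Mathlib

section
/- Let ρ be a Banach function norm on (Γ,μ), t ∈ Γ, and let w be a weight with w ∈ X and 1/w ∈ X'. If w ∈ A_X(Γ,t) and 1 ∈ A_X(Γ,t), then 1 ≤ sup_{R>0} C(w,t,R) < ∞ and 1 ≤ sup_{R>0} C'(w,t,R) < ∞. -/
open MeasureTheory Filter Set Topology
open scoped ENNReal NNReal

noncomputable section

namespace SIO

/-- The portion `Γ(t,R) := {τ ∈ Γ : |τ − t| < R}`. -/
def portion (Γ : Set ℂ) (t : ℂ) (R : ℝ) : Set ℂ := Γ ∩ Metric.ball t R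

/-- The annulus portion `Δ(t,R) := Γ(t,R) \ Γ(t,R/2)`. -/
def annulus (Γ : Set ℂ) (t : ℂ) (R : ℝ) : Set ℂ := portion Γ t R \ portion Γ t (R / 2)

/-- `d_t := max_{τ ∈ Γ} |τ − t|`. -/
def dMax (Γ : Set ℂ) (t : ℂ) : ℝ := sSup ((fun τ => dist τ t) '' Γ)

/-- A weight: measurable, positive and finite a.e. -/
def IsWeight (μ : Measure ℂ) (w : ℂ → ℝ≥0∞) : Prop :=
  Measurable w ∧ ∀ᵐ x ∂μ, 0 < w x ∧ w x < ⊤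

/-- A Banach function norm on `(Γ, μ)`: axioms (A1)–(A5). -/
structure IsBFN (μ : Measure ℂ) (ρ : (ℂ → ℝ≥0∞) → ℝ≥0∞) : Prop where
  eq_zero_iff : ∀ f : ℂ → ℝ≥0∞, Measurable f → (ρ f = 0 ↔ f =ᵐ[μ] 0)
  smul : ∀ (a : ℝ≥0) (f : ℂ → ℝ≥0∞), Measurable f →
    ρ (fun x => (a : ℝ≥0∞) * f x) = (a : ℝ≥0∞) * ρ f
  add_le : ∀ f g : ℂ → ℝ≥0∞, Measurable f → Measurable g →
    ρ (fun x => f x + g x) ≤ ρ f + ρ g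
  mono : ∀ f g : ℂ → ℝ≥0∞, Measurable f → Measurable g →
    (∀ᵐ x ∂μ, g x ≤ f x) → ρ g ≤ ρ f
  fatou : ∀ (fs : ℕ → ℂ → ℝ≥0∞) (f : ℂ → ℝ≥0∞), (∀ n, Measurable (fs n)) → Measurable f →
    (∀ᵐ x ∂μ, Monotone fun n => fs n x) →
    (∀ᵐ x ∂μ, Tendsto (fun n => fs n x) atTop (𝓝 (f x))) →
    Tendsto (fun n => ρ (fs n)) atTop (𝓝 (ρ f))
  indicator_lt_top : ∀ E : Set ℂ, MeasurableSet E → ρ (E.indicator 1) < ⊤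
  le_integral : ∀ E : Set ℂ, MeasurableSet E → ∃ C : ℝ≥0∞, 0 < C ∧ C < ⊤ ∧
    ∀ f : ℂ → ℝ≥0∞, Measurable f → ∫⁻ x in E, f x ∂μ ≤ C * ρ f

/-- The associate norm `ρ'`. -/
def assoc (μ : Measure ℂ) (ρ : (ℂ → ℝ≥0∞) → ℝ≥0∞) (g : ℂ → ℝ≥0∞) : ℝ≥0∞ :=
  ⨆ (f : ℂ → ℝ≥0∞) (_ : Measurable f) (_ : ρ f ≤ 1), ∫⁻ x, f x * g x ∂μ

/-- `B_{t,R}(w)` built from two norm functionals `N` (for `X`) and `N'` (for `X'`). -/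
def Bwt (N N' : (ℂ → ℝ≥0∞) → ℝ≥0∞) (Γ : Set ℂ) (w : ℂ → ℝ≥0∞) (t : ℂ) (R : ℝ) : ℝ≥0∞ :=
  (ENNReal.ofReal R)⁻¹ * N ((portion Γ t R).indicator w) *
    N' ((portion Γ t R).indicator fun x => (w x)⁻¹)

/-- `w ∈ A_X(Γ, t)`. -/
def MemAt (N N' : (ℂ → ℝ≥0∞) → ℝ≥0∞) (Γ : Set ℂ) (w : ℂ → ℝ≥0∞) (t : ℂ) : Prop :=
  (⨆ (R : ℝ) (_ : 0 < R), Bwt N N' Γ w t R) < ⊤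

/-- `w ∈ A_X(Γ)`. -/
def MemAGlob (N N' : (ℂ → ℝ≥0∞) → ℝ≥0∞) (Γ : Set ℂ) (w : ℂ → ℝ≥0∞) : Prop :=
  (⨆ t ∈ Γ, ⨆ (R : ℝ) (_ : 0 < R), Bwt N N' Γ w t R) < ⊤

/-- `Ω_t(f,R)`: mean of `f` over the portion `Γ(t,R)`. -/
def avg (μ : Measure ℂ) (Γ : Set ℂ) (f : ℂ → ℝ) (t : ℂ) (R : ℝ) : ℝ :=
  (∫ x in portion Γ t R, f x ∂μ) / (μ (portion Γ t R)).toReal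

/-- `log w` as a real-valued function. -/
def logw (w : ℂ → ℝ≥0∞) : ℂ → ℝ := fun x => Real.log (w x).toReal

/-- The BMO seminorm `‖f‖_{*,t}` at a point `t`. -/
def bmoAt (μ : Measure ℂ) (Γ : Set ℂ) (f : ℂ → ℝ) (t : ℂ) : ℝ≥0∞ :=
  ⨆ (R : ℝ) (_ : 0 < R),
    ENNReal.ofReal ((∫ x in portion Γ t R, |f x - avg μ Γ f t R| ∂μ) /
      (μ (portion Γ t R)).toReal)

/-- The quantity `C(w,t,R)`. -/
def Cq (μ : Measure ℂ) (N N' : (ℂ → ℝ≥0∞) → ℝ≥0∞) (Γ : Set ℂ) (w : ℂ → ℝ≥0∞)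
    (t : ℂ) (R : ℝ) : ℝ≥0∞ :=
  ENNReal.ofReal (Real.exp (-(avg μ Γ (logw w) t R))) *
    N ((portion Γ t R).indicator w) * N' ((portion Γ t R).indicator 1) /
      μ (portion Γ t R)

/-- The quantity `C'(w,t,R)`. -/
def Cq' (μ : Measure ℂ) (N N' : (ℂ → ℝ≥0∞) → ℝ≥0∞) (Γ : Set ℂ) (w : ℂ → ℝ≥0∞)
    (t : ℂ) (R : ℝ) : ℝ≥0∞ :=
  ENNReal.ofReal (Real.exp (avg μ Γ (logw w) t R)) *
    N ((portion Γ t R).indicator 1) * N' ((portion Γ t R).indicator fun x => (w x)⁻¹) /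
      μ (portion Γ t R)

/-- Submultiplicative function on `(0,∞)`. -/
def Submult (Φ : ℝ → ℝ≥0∞) : Prop := ∀ x y : ℝ, 0 < x → 0 < y → Φ (x * y) ≤ Φ x * Φ y

/-- Regular: bounded in an open neighborhood of `1`. -/
def RegularFn (Φ : ℝ → ℝ≥0∞) : Prop :=
  ∃ δ : ℝ, 0 < δ ∧ ∃ M : ℝ≥0∞, M < ⊤ ∧ ∀ x : ℝ, |x - 1| < δ → Φ x ≤ M

/-- Lower index `α(Φ)`. -/
def alphaInd (Φ : ℝ → ℝ≥0∞) : ℝ :=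
  sSup ((fun x => Real.log (Φ x).toReal / Real.log x) '' Ioo (0 : ℝ) 1)

/-- Upper index `β(Φ)`. -/
def betaInd (Φ : ℝ → ℝ≥0∞) : ℝ :=
  sInf ((fun x => Real.log (Φ x).toReal / Real.log x) '' Ioi (1 : ℝ))

/-- `H_w(R₁,R₂)`. -/
def Hq (μ : Measure ℂ) (Γ : Set ℂ) (w : ℂ → ℝ≥0∞) (t : ℂ) (R₁ R₂ : ℝ) : ℝ :=
  Real.exp (avg μ Γ (logw w) t R₁ - avg μ Γ (logw w) t R₂)

/-- The submultiplicative function `V_t w`. -/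
def Vt (μ : Measure ℂ) (Γ : Set ℂ) (w : ℂ → ℝ≥0∞) (t : ℂ) : ℝ → ℝ≥0∞ := fun x =>
  if x ≤ 1 then
    ⨆ (R : ℝ) (_ : R ∈ Ioc (0 : ℝ) (dMax Γ t)), ENNReal.ofReal (Hq μ Γ w t (x * R) R)
  else
    ⨆ (R : ℝ) (_ : R ∈ Ioc (0 : ℝ) (dMax Γ t)), ENNReal.ofReal (Hq μ Γ w t R (x⁻¹ * R))

/-- `F_ψ(R₁,R₂)` for a continuous positive `ψ` on `Γ \ {t}`. -/
def Fq (Γ : Set ℂ) (ψ : ℂ → ℝ) (t : ℂ) (R₁ R₂ : ℝ) : ℝ :=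
  sSup (ψ '' (Γ ∩ Metric.sphere t R₁)) / sInf (ψ '' (Γ ∩ Metric.sphere t R₂))

/-- The submultiplicative function `W_t ψ`. -/
def Wt (Γ : Set ℂ) (ψ : ℂ → ℝ) (t : ℂ) : ℝ → ℝ≥0∞ := fun x =>
  if x ≤ 1 then
    ⨆ (R : ℝ) (_ : R ∈ Ioc (0 : ℝ) (dMax Γ t)), ENNReal.ofReal (Fq Γ ψ t (x * R) R)
  else
    ⨆ (R : ℝ) (_ : R ∈ Ioc (0 : ℝ) (dMax Γ t)), ENNReal.ofReal (Fq Γ ψ t R (x⁻¹ * R))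

/-- `G_w(R₁,R₂)` built from two norm functionals. -/
def Gq (μ : Measure ℂ) (N N' : (ℂ → ℝ≥0∞) → ℝ≥0∞) (Γ : Set ℂ) (w : ℂ → ℝ≥0∞)
    (t : ℂ) (R₁ R₂ : ℝ) : ℝ≥0∞ :=
  N ((annulus Γ t R₁).indicator w) * N' ((annulus Γ t R₂).indicator fun x => (w x)⁻¹) /
    μ (annulus Γ t R₂)

/-- The submultiplicative function `Q_t w`. -/
def Qt (μ : Measure ℂ) (N N' : (ℂ → ℝ≥0∞) → ℝ≥0∞) (Γ : Set ℂ) (w : ℂ → ℝ≥0∞)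
    (t : ℂ) : ℝ → ℝ≥0∞ := fun x =>
  if x ≤ 1 then
    ⨆ (R : ℝ) (_ : R ∈ Ioc (0 : ℝ) (dMax Γ t)), Gq μ N N' Γ w t (x * R) R
  else
    ⨆ (R : ℝ) (_ : R ∈ Ioc (0 : ℝ) (dMax Γ t)), Gq μ N N' Γ w t R (x⁻¹ * R)

/-- The function `Q_t⁰ w`. -/
def Qt0 (μ : Measure ℂ) (N N' : (ℂ → ℝ≥0∞) → ℝ≥0∞) (Γ : Set ℂ) (w : ℂ → ℝ≥0∞)
    (t : ℂ) : ℝ → ℝ≥0∞ := fun x =>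
  Filter.limsup (fun R => Gq μ N N' Γ w t (x * R) R) (𝓝[>] (0 : ℝ))

/-- Γ is locally a Carleson curve at `t`. -/
def LocCarleson (μ : Measure ℂ) (Γ : Set ℂ) (t : ℂ) : Prop :=
  (⨆ (R : ℝ) (_ : 0 < R), μ (portion Γ t R) / ENNReal.ofReal R) < ⊤

/-- Γ is a Carleson curve. -/
def Carleson (μ : Measure ℂ) (Γ : Set ℂ) : Prop :=
  (⨆ t ∈ Γ, ⨆ (R : ℝ) (_ : 0 < R), μ (portion Γ t R) / ENNReal.ofReal R) < ⊤

/-- The Luxemburg–Nakano norm of the variable exponent Lebesgue space `L^{p(·)}`. -/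
def nakanoNorm (μ : Measure ℂ) (p : ℂ → ℝ) (f : ℂ → ℝ≥0∞) : ℝ≥0∞ :=
  sInf {lam : ℝ≥0∞ | 0 < lam ∧ ∫⁻ x, (f x / lam) ^ (p x) ∂μ ≤ 1}

/-- The conjugate exponent function. -/
def conjExp (p : ℂ → ℝ) : ℂ → ℝ := fun τ => p τ / (p τ - 1)

/-- The class `P_t` of variable exponents. -/
def ClassPt (Γ : Set ℂ) (p : ℂ → ℝ) (t : ℂ) : Prop :=
  ∃ A : ℝ, 0 < A ∧ ∀ τ ∈ Γ, dist τ t ≤ 1 / 2 →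
    |p τ - p t| ≤ A / (-Real.log (dist τ t))

/-- The class `P` of variable exponents. -/
def ClassP (Γ : Set ℂ) (p : ℂ → ℝ) : Prop :=
  ∃ A : ℝ, 0 < A ∧ ∀ τ ∈ Γ, ∀ t ∈ Γ, dist τ t ≤ 1 / 2 →
    |p τ - p t| ≤ A / (-Real.log (dist τ t))

/-- A continuous branch of the argument of `τ − t` on `Γ \ {t}`. -/
def IsArgBranch (Γ : Set ℂ) (t : ℂ) (θ : ℂ → ℝ) : Prop :=
  ContinuousOn θ (Γ \ {t}) ∧ ∀ τ ∈ Γ \ {t},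
    τ - t = ((‖τ - t‖ : ℝ) : ℂ) * Complex.exp (Complex.I * θ τ)

/-- `η_t(τ) := e^{−arg(τ−t)}`. -/
def etaW (θ : ℂ → ℝ) : ℂ → ℝ := fun τ => Real.exp (-θ τ)

/-- `φ_{t,γ}(τ) := |τ−t|^{Re γ} (η_t(τ))^{Im γ}`. -/
def phiW (t : ℂ) (θ : ℂ → ℝ) (γ : ℂ) : ℂ → ℝ :=
  fun τ => (dist τ t) ^ γ.re * (etaW θ τ) ^ γ.im


end SIO

open SIO

section Aux
open MeasureTheory Filter Set Topology SIO
open scoped ENNReal NNReal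

variable {μ : MeasureTheory.Measure ℂ} {ρ : (ℂ → ℝ≥0∞) → ℝ≥0∞}

lemma assoc_mono (g₁ g₂ : ℂ → ℝ≥0∞) (h : ∀ x, g₁ x ≤ g₂ x) :
    assoc μ ρ g₁ ≤ assoc μ ρ g₂ := by
  refine iSup_le fun f => iSup_le fun hf => iSup_le fun hρf => ?_
  refine le_trans (MeasureTheory.lintegral_mono fun x => mul_le_mul_right (h x) _) ?_
  exact le_iSup_of_le f (by rw [iSup_pos hf, iSup_pos hρf])

lemma holder (hρ : IsBFN μ ρ) (f g : ℂ → ℝ≥0∞) (hf : Measurable f) (hfin : ρ f < ⊤) :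
    ∫⁻ x, f x * g x ∂μ ≤ ρ f * assoc μ ρ g := by
  rcases eq_or_ne (ρ f) 0 with h0 | h0
  · have hf0 : f =ᵐ[μ] 0 := (hρ.eq_zero_iff f hf).1 h0
    have : (fun x => f x * g x) =ᵐ[μ] 0 := by
      filter_upwards [hf0] with x hx
      simp only [Pi.zero_apply] at hx ⊢; simp [hx]
    rw [MeasureTheory.lintegral_congr_ae this]; simp
  · set c := ρ f with hc
    have hcT : c ≠ ⊤ := hfin.ne
    set a : ℝ≥0 := c.toNNReal⁻¹ with ha
    have hac : (a : ℝ≥0∞) = c⁻¹ := by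
      rw [ha, ENNReal.coe_inv (by simpa [ENNReal.toNNReal_eq_zero_iff, hcT] using h0),
        ENNReal.coe_toNNReal hcT]
    have hρh : ρ (fun x => (a : ℝ≥0∞) * f x) = 1 := by
      rw [hρ.smul a f hf, hac, ENNReal.inv_mul_cancel h0 hcT]
    have hle : ∫⁻ x, ((a : ℝ≥0∞) * f x) * g x ∂μ ≤ assoc μ ρ g := by
      refine le_iSup_of_le (fun x => (a : ℝ≥0∞) * f x) ?_
      rw [iSup_pos (hf.const_mul _), iSup_pos hρh.le]
    have hrw : ∫⁻ x, ((a : ℝ≥0∞) * f x) * g x ∂μ = c⁻¹ * ∫⁻ x, f x * g x ∂μ := by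
      rw [← MeasureTheory.lintegral_const_mul' c⁻¹ _ (by simp [h0])]
      refine lintegral_congr fun x => ?_
      rw [hac, mul_assoc]
    rw [hrw] at hle
    calc ∫⁻ x, f x * g x ∂μ = c * (c⁻¹ * ∫⁻ x, f x * g x ∂μ) := by
          rw [← mul_assoc, ENNReal.mul_inv_cancel h0 hcT, one_mul]
      _ ≤ c * assoc μ ρ g := mul_le_mul_right hle _

lemma assoc_indicator_lt_top (hρ : IsBFN μ ρ) (E : Set ℂ) (hE : MeasurableSet E) :
    assoc μ ρ (E.indicator 1) < ⊤ := by
  obtain ⟨C, hC0, hCt, hC⟩ := hρ.le_integral E hE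
  have : assoc μ ρ (E.indicator 1) ≤ C := by
    refine iSup_le fun f => iSup_le fun hf => iSup_le fun hρf => ?_
    have : ∫⁻ x, f x * E.indicator 1 x ∂μ = ∫⁻ x in E, f x ∂μ := by
      rw [← MeasureTheory.lintegral_indicator hE _]
      refine lintegral_congr fun x => ?_
      by_cases hx : x ∈ E <;> simp [Set.indicator_apply, hx]
    rw [this]
    calc ∫⁻ x in E, f x ∂μ ≤ C * ρ f := hC f hf
      _ ≤ C * 1 := mul_le_mul_right hρf _
      _ = C := mul_one C
  exact lt_of_le_of_lt this hCt

end Aux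

section Aux2
open MeasureTheory Filter Set Topology SIO
open scoped ENNReal NNReal

lemma jensen_exp {ν : MeasureTheory.Measure ℂ} [IsFiniteMeasure ν] {L G : ℂ → ℝ}
    (hL : Integrable L ν) (hG : Integrable G ν) (hLG : ∀ᵐ x ∂ν, Real.exp (L x) ≤ G x) :
    Real.exp ((∫ x, L x ∂ν) / (ν Set.univ).toReal) * (ν Set.univ).toReal ≤ ∫ x, G x ∂ν := by
  set m : ℝ := (ν Set.univ).toReal with hm
  have hG0 : 0 ≤ ∫ x, G x ∂ν := by
    refine integral_nonneg_of_ae ?_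
    filter_upwards [hLG] with x hx
    exact le_trans (Real.exp_pos _).le hx
  rcases eq_or_lt_of_le (ENNReal.toReal_nonneg : (0:ℝ) ≤ m) with h0 | h0
  · rw [← hm] at h0; rw [← h0, mul_zero]; exact hG0
  · set a : ℝ := (∫ x, L x ∂ν) / m with haa
    have hint : Integrable (fun x => Real.exp a * (1 + (L x - a))) ν :=
      (((integrable_const (1:ℝ)).add (hL.sub (integrable_const a))).const_mul _)
    have key : ∀ᵐ x ∂ν, Real.exp a * (1 + (L x - a)) ≤ G x := by
      filter_upwards [hLG] with x hx
      have h1 : (L x - a) + 1 ≤ Real.exp (L x - a) := Real.add_one_le_exp _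
      have h2 : Real.exp a * ((L x - a) + 1) ≤ Real.exp a * Real.exp (L x - a) :=
        mul_le_mul_of_nonneg_left h1 (Real.exp_pos _).le
      rw [← Real.exp_add] at h2
      have h3 : a + (L x - a) = L x := by ring
      rw [h3] at h2
      calc Real.exp a * (1 + (L x - a)) = Real.exp a * ((L x - a) + 1) := by ring
        _ ≤ Real.exp (L x) := h2
        _ ≤ G x := hx
    have hmono := integral_mono_ae hint hG key
    have hcalc : ∫ x, Real.exp a * (1 + (L x - a)) ∂ν = Real.exp a * m := by
      have hfe : (fun x => Real.exp a * (1 + (L x - a))) = fun x => Real.exp a * (L x + (1 - a)) := by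
        funext x; ring
      rw [hfe, integral_const_mul, integral_add hL (integrable_const _), integral_const]
      have hLm : ∫ x, L x ∂ν = a * m := by
        rw [haa, div_mul_cancel₀]
        rw [← hm] at h0; exact h0.ne'
      rw [hLm]
      simp only [smul_eq_mul, measureReal_def, ← hm]
      ring
    rw [hcalc] at hmono
    exact hmono

end Aux2

section Aux3
open MeasureTheory Filter Set Topology SIO
open scoped ENNReal NNReal

lemma dist_le_dMax {Γ : Set ℂ} (hΓc : IsCompact Γ) {t τ : ℂ} (hτ : τ ∈ Γ) :
    dist τ t ≤ dMax Γ t := by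
  refine le_csSup ?_ ⟨τ, hτ, rfl⟩
  exact (hΓc.image (Continuous.dist continuous_id continuous_const)).bddAbove

lemma portion_subset (Γ : Set ℂ) (t : ℂ) (R : ℝ) : portion Γ t R ⊆ Γ :=
  Set.inter_subset_left

lemma portion_eq_of_lt {Γ : Set ℂ} (hΓc : IsCompact Γ) {t : ℂ} {R : ℝ}
    (hR : dMax Γ t < R) : portion Γ t R = Γ := by
  refine Set.inter_eq_left.mpr fun τ hτ => ?_
  exact Metric.mem_ball.mpr (lt_of_le_of_lt (dist_le_dMax hΓc hτ) hR)

lemma dMax_pos {Γ : Set ℂ} (hΓc : IsCompact Γ) {t : ℂ} (ht : t ∈ Γ)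
    {μ : MeasureTheory.Measure ℂ} (hμ : μ = (μH[1] : MeasureTheory.Measure ℂ).restrict Γ)
    (hμ0 : 0 < μ Γ) : 0 < dMax Γ t := by
  by_contra h
  push_neg at h
  have hsub : Γ ⊆ {t} := by
    intro τ hτ
    have h1 : dist τ t ≤ 0 := le_trans (dist_le_dMax hΓc hτ) h
    have h2 : dist τ t = 0 := le_antisymm h1 dist_nonneg
    simpa [Set.mem_singleton_iff] using dist_eq_zero.mp h2
  have hsing : (μH[1] : MeasureTheory.Measure ℂ) ({t} : Set ℂ) = 0 := by
    rcases MeasureTheory.Measure.hausdorffMeasure_zero_or_top (by norm_num : (0:ℝ) < 1) ({t} : Set ℂ) with h' | h'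
    · exact h'
    · rw [MeasureTheory.Measure.hausdorffMeasure_zero_singleton] at h'
      exact absurd h' (by simp)
  have : μ Γ = 0 := by
    rw [hμ, MeasureTheory.Measure.restrict_apply' hΓc.measurableSet, Set.inter_self]
    exact le_antisymm (le_trans (measure_mono hsub) hsing.le) zero_le
  exact absurd this hμ0.ne'

lemma measure_portion_ge {Γ : Set ℂ} (hΓc : IsCompact Γ) (hΓconn : IsConnected Γ)
    {t : ℂ} (ht : t ∈ Γ)
    {μ : MeasureTheory.Measure ℂ} (hμ : μ = (μH[1] : MeasureTheory.Measure ℂ).restrict Γ)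
    {R : ℝ} (hR : 0 < R) :
    ENNReal.ofReal (min R (dMax Γ t)) ≤ μ (portion Γ t R) := by
  set d := dMax Γ t with hd
  set s := min R d with hs
  rcases le_or_gt s 0 with hs0 | hs0
  · simp [ENNReal.ofReal_eq_zero.mpr hs0]
  have hPmeas : MeasurableSet (portion Γ t R) :=
    hΓc.measurableSet.inter measurableSet_ball
  -- the image of Γ under dist · t contains [0, d]
  have hKconn : IsPreconnected ((fun τ => dist τ t) '' Γ) :=
    hΓconn.isPreconnected.image _
      ((Continuous.dist continuous_id continuous_const).continuousOn)
  have h0mem : (0:ℝ) ∈ (fun τ => dist τ t) '' Γ := ⟨t, ht, dist_self t⟩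
  have hdmem : d ∈ (fun τ => dist τ t) '' Γ := by
    rw [hd, dMax]
    refine IsCompact.sSup_mem ?_ ⟨0, h0mem⟩
    exact hΓc.image (Continuous.dist continuous_id continuous_const)
  have himg : Set.Ico (0:ℝ) s ⊆ (fun τ => dist τ t) '' (portion Γ t R) := by
    rintro y ⟨hy0, hys⟩
    have hyK : y ∈ (fun τ => dist τ t) '' Γ := by
      refine hKconn.Icc_subset h0mem hdmem ⟨hy0, ?_⟩
      exact le_trans hys.le (min_le_right _ _)
    obtain ⟨τ, hτΓ, hτy⟩ := hyK
    have hτy' : dist τ t = y := hτy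
    refine ⟨τ, ⟨hτΓ, Metric.mem_ball.mpr ?_⟩, hτy⟩
    rw [hτy']
    exact lt_of_lt_of_le hys (min_le_left _ _)
  have hlip : LipschitzWith 1 (fun τ : ℂ => dist τ t) := LipschitzWith.dist_left t
  have hineq : (μH[1] : MeasureTheory.Measure ℝ) (Set.Ico (0:ℝ) s)
      ≤ (μH[1] : MeasureTheory.Measure ℂ) (portion Γ t R) := by
    calc (μH[1] : MeasureTheory.Measure ℝ) (Set.Ico (0:ℝ) s)
        ≤ (μH[1] : MeasureTheory.Measure ℝ) ((fun τ => dist τ t) '' (portion Γ t R)) :=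
          measure_mono himg
      _ ≤ (1:ℝ≥0) ^ (1:ℝ) * (μH[1] : MeasureTheory.Measure ℂ) (portion Γ t R) :=
          hlip.hausdorffMeasure_image_le (by norm_num) _
      _ = (μH[1] : MeasureTheory.Measure ℂ) (portion Γ t R) := by simp
  have hvol : (μH[1] : MeasureTheory.Measure ℝ) (Set.Ico (0:ℝ) s) = ENNReal.ofReal s := by
    rw [MeasureTheory.hausdorffMeasure_real, Real.volume_Ico, sub_zero]
  rw [hμ, MeasureTheory.Measure.restrict_apply hPmeas,
    Set.inter_eq_left.mpr (portion_subset Γ t R)]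
  rw [hvol] at hineq
  exact hineq

end Aux3

section Aux4
open MeasureTheory Filter Set Topology SIO
open scoped ENNReal NNReal

lemma indicator_mul_indicator_one (P : Set ℂ) (g : ℂ → ℝ≥0∞) (x : ℂ) :
    P.indicator g x * P.indicator 1 x = P.indicator g x := by
  by_cases hx : x ∈ P <;> simp [Set.indicator_apply, hx]

lemma indicator_one_mul_indicator (P : Set ℂ) (g : ℂ → ℝ≥0∞) (x : ℂ) :
    P.indicator 1 x * P.indicator g x = P.indicator g x := by
  by_cases hx : x ∈ P <;> simp [Set.indicator_apply, hx]

lemma one_le_Cq_both {Γ : Set ℂ} (hΓm : MeasurableSet Γ)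
    {μ : MeasureTheory.Measure ℂ} [IsFiniteMeasure μ] (t : ℂ) (R : ℝ)
    {ρ : (ℂ → ℝ≥0∞) → ℝ≥0∞} (hρ : IsBFN μ ρ)
    {w : ℂ → ℝ≥0∞} (hw : IsWeight μ w)
    (hwX : ρ w < ⊤) (hwX' : assoc μ ρ (fun x => (w x)⁻¹) < ⊤)
    (hm0 : 0 < μ (portion Γ t R)) :
    1 ≤ Cq μ ρ (assoc μ ρ) Γ w t R ∧ 1 ≤ Cq' μ ρ (assoc μ ρ) Γ w t R := by
  set P := portion Γ t R with hPdef
  have hP : MeasurableSet P := hΓm.inter measurableSet_ball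
  have hmT : μ P < ⊤ := measure_lt_top μ P
  set ν := μ.restrict P with hν
  have hνuniv : ν Set.univ = μ P := MeasureTheory.Measure.restrict_apply_univ P
  have hm' : 0 < (μ P).toReal := ENNReal.toReal_pos hm0.ne' hmT.ne
  have hwae : ∀ᵐ x ∂ν, 0 < w x ∧ w x < ⊤ := ae_restrict_of_ae hw.2
  -- lintegral finiteness
  have hIw : ∫⁻ x, w x ∂ν < ⊤ := by
    obtain ⟨C, _, hCt, hC⟩ := hρ.le_integral P hP
    exact lt_of_le_of_lt (hC w hw.1) (ENNReal.mul_lt_top hCt hwX)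
  have hIwi : ∫⁻ x, (w x)⁻¹ ∂ν < ⊤ := by
    have h1 := holder hρ (P.indicator 1) (fun x => (w x)⁻¹)
      (measurable_one.indicator hP) (hρ.indicator_lt_top P hP)
    have h2 : ∫⁻ x, P.indicator 1 x * (w x)⁻¹ ∂μ = ∫⁻ x, (w x)⁻¹ ∂ν := by
      rw [hν, ← MeasureTheory.lintegral_indicator hP]
      refine lintegral_congr fun x => ?_
      by_cases hx : x ∈ P <;> simp [Set.indicator_apply, hx]
    rw [h2] at h1
    refine lt_of_le_of_lt h1 (ENNReal.mul_lt_top (hρ.indicator_lt_top P hP) ?_)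
    refine lt_of_le_of_lt (assoc_mono _ _ fun x => ?_) hwX'
    by_cases hx : x ∈ P <;> simp [Set.indicator_apply, hx]
  -- integrability
  have iw : Integrable (fun x => (w x).toReal) ν :=
    integrable_toReal_of_lintegral_ne_top hw.1.aemeasurable hIw.ne
  have iwi : Integrable (fun x => ((w x)⁻¹).toReal) ν :=
    integrable_toReal_of_lintegral_ne_top hw.1.inv.aemeasurable hIwi.ne
  have ilog : Integrable (logw w) ν := by
    refine ((iw.add iwi).mono' ?_ ?_)
    · exact (Real.measurable_log.comp hw.1.ennreal_toReal).aestronglyMeasurable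
    · filter_upwards [hwae] with x hx
      obtain ⟨h0, hT⟩ := hx
      have hy : 0 < (w x).toReal := ENNReal.toReal_pos h0.ne' hT.ne
      have hinv : ((w x)⁻¹).toReal = (w x).toReal⁻¹ := ENNReal.toReal_inv _
      show ‖logw w x‖ ≤ (w x).toReal + ((w x)⁻¹).toReal
      rw [hinv]
      set y := (w x).toReal
      have hup : Real.log y ≤ y - 1 := Real.log_le_sub_one_of_pos hy
      have hdown : Real.log y⁻¹ ≤ y⁻¹ - 1 := Real.log_le_sub_one_of_pos (by positivity)
      rw [Real.log_inv] at hdown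
      have hinv0 : 0 < y⁻¹ := by positivity
      simp only [logw, Real.norm_eq_abs]
      rw [abs_le]
      constructor <;> [linarith; linarith]
  -- Jensen
  set a : ℝ := avg μ Γ (logw w) t R with haa
  have haval : a = (∫ x, logw w x ∂ν) / (ν Set.univ).toReal := by
    rw [haa, avg, hνuniv]
  have J1 : Real.exp a * (μ P).toReal ≤ ∫ x, (w x).toReal ∂ν := by
    have := jensen_exp ilog iw ?_
    · rw [← haval, hνuniv] at this; exact this
    · filter_upwards [hwae] with x hx
      rw [logw, Real.exp_log (ENNReal.toReal_pos hx.1.ne' hx.2.ne)]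
  have J2 : Real.exp (-a) * (μ P).toReal ≤ ∫ x, ((w x)⁻¹).toReal ∂ν := by
    have := jensen_exp ilog.neg iwi ?_
    · have h1 : (∫ x, (-logw w) x ∂ν) / (ν Set.univ).toReal = -a := by
        simp only [Pi.neg_apply]
        rw [integral_neg, haval, neg_div]
      rw [h1, hνuniv] at this
      exact this
    · filter_upwards [hwae] with x hx
      have hy : 0 < (w x).toReal := ENNReal.toReal_pos hx.1.ne' hx.2.ne
      have : Real.exp (-logw w x) = (w x).toReal⁻¹ := by
        rw [logw, Real.exp_neg, Real.exp_log hy]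
      rw [Pi.neg_apply, this, ENNReal.toReal_inv]
  -- ENNReal conversions
  have hA : ENNReal.ofReal (Real.exp a) * μ P ≤ ∫⁻ x, w x ∂ν := by
    have h1 : μ P = ENNReal.ofReal (μ P).toReal := (ENNReal.ofReal_toReal hmT.ne).symm
    rw [h1, ← ENNReal.ofReal_mul (Real.exp_pos a).le]
    calc ENNReal.ofReal (Real.exp a * (μ P).toReal)
        ≤ ENNReal.ofReal (∫ x, (w x).toReal ∂ν) := ENNReal.ofReal_le_ofReal J1
      _ = ∫⁻ x, ENNReal.ofReal ((w x).toReal) ∂ν :=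
          MeasureTheory.ofReal_integral_eq_lintegral_ofReal iw
            (Filter.Eventually.of_forall fun x => ENNReal.toReal_nonneg)
      _ = ∫⁻ x, w x ∂ν := by
          refine lintegral_congr_ae ?_
          filter_upwards [hwae] with x hx
          exact ENNReal.ofReal_toReal hx.2.ne
  have hA' : ENNReal.ofReal (Real.exp (-a)) * μ P ≤ ∫⁻ x, (w x)⁻¹ ∂ν := by
    have h1 : μ P = ENNReal.ofReal (μ P).toReal := (ENNReal.ofReal_toReal hmT.ne).symm
    rw [h1, ← ENNReal.ofReal_mul (Real.exp_pos _).le]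
    calc ENNReal.ofReal (Real.exp (-a) * (μ P).toReal)
        ≤ ENNReal.ofReal (∫ x, ((w x)⁻¹).toReal ∂ν) := ENNReal.ofReal_le_ofReal J2
      _ = ∫⁻ x, ENNReal.ofReal (((w x)⁻¹).toReal) ∂ν :=
          MeasureTheory.ofReal_integral_eq_lintegral_ofReal iwi
            (Filter.Eventually.of_forall fun x => ENNReal.toReal_nonneg)
      _ = ∫⁻ x, (w x)⁻¹ ∂ν := by
          refine lintegral_congr_ae ?_
          filter_upwards [hwae] with x hx
          refine ENNReal.ofReal_toReal ?_
          simp [hx.1.ne']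
  -- Hoelder bounds
  have hH : ∫⁻ x, w x ∂ν ≤ ρ (P.indicator w) * assoc μ ρ (P.indicator 1) := by
    have hwind : ρ (P.indicator w) < ⊤ := by
      refine lt_of_le_of_lt (hρ.mono w (P.indicator w) hw.1 (hw.1.indicator hP) ?_) hwX
      exact Filter.Eventually.of_forall fun x => Set.indicator_le_self _ _ x
    have h1 := holder hρ (P.indicator w) (P.indicator 1) (hw.1.indicator hP) hwind
    have h2 : ∫⁻ x, P.indicator w x * P.indicator 1 x ∂μ = ∫⁻ x, w x ∂ν := by
      rw [hν, ← MeasureTheory.lintegral_indicator hP]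
      exact lintegral_congr (indicator_mul_indicator_one P w)
    rwa [h2] at h1
  have hH' : ∫⁻ x, (w x)⁻¹ ∂ν
      ≤ ρ (P.indicator 1) * assoc μ ρ (P.indicator fun x => (w x)⁻¹) := by
    have h1 := holder hρ (P.indicator 1) (P.indicator fun x => (w x)⁻¹)
      (measurable_one.indicator hP) (hρ.indicator_lt_top P hP)
    have h2 : ∫⁻ x, P.indicator 1 x * P.indicator (fun x => (w x)⁻¹) x ∂μ
        = ∫⁻ x, (w x)⁻¹ ∂ν := by
      rw [hν, ← MeasureTheory.lintegral_indicator hP]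
      exact lintegral_congr (indicator_one_mul_indicator P _)
    rwa [h2] at h1
  -- exp cancellation
  have hcancel : ENNReal.ofReal (Real.exp (-a)) * ENNReal.ofReal (Real.exp a) = 1 := by
    rw [← ENNReal.ofReal_mul (Real.exp_pos _).le, ← Real.exp_add, neg_add_cancel,
      Real.exp_zero, ENNReal.ofReal_one]
  have hcancel' : ENNReal.ofReal (Real.exp a) * ENNReal.ofReal (Real.exp (-a)) = 1 := by
    rw [mul_comm]; exact hcancel
  constructor
  · rw [Cq, ENNReal.le_div_iff_mul_le (Or.inl hm0.ne') (Or.inl hmT.ne), one_mul]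
    calc μ P = ENNReal.ofReal (Real.exp (-a)) * (ENNReal.ofReal (Real.exp a) * μ P) := by
          rw [← mul_assoc, hcancel, one_mul]
      _ ≤ ENNReal.ofReal (Real.exp (-a)) * (ρ (P.indicator w) * assoc μ ρ (P.indicator 1)) :=
          mul_le_mul_right (le_trans hA hH) _
      _ = ENNReal.ofReal (Real.exp (-avg μ Γ (logw w) t R)) * ρ (P.indicator w)
            * assoc μ ρ (P.indicator 1) := by rw [mul_assoc, haa]
  · rw [Cq', ENNReal.le_div_iff_mul_le (Or.inl hm0.ne') (Or.inl hmT.ne), one_mul]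
    calc μ P = ENNReal.ofReal (Real.exp a) * (ENNReal.ofReal (Real.exp (-a)) * μ P) := by
          rw [← mul_assoc, hcancel', one_mul]
      _ ≤ ENNReal.ofReal (Real.exp a)
            * (ρ (P.indicator 1) * assoc μ ρ (P.indicator fun x => (w x)⁻¹)) :=
          mul_le_mul_right (le_trans hA' hH') _
      _ = ENNReal.ofReal (Real.exp (avg μ Γ (logw w) t R)) * ρ (P.indicator 1)
            * assoc μ ρ (P.indicator fun x => (w x)⁻¹) := by rw [mul_assoc, haa]

end Aux4

section Aux5
open MeasureTheory Filter Set Topology SIO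
open scoped ENNReal NNReal

lemma Cq_le_prod {Γ : Set ℂ} (hΓm : MeasurableSet Γ)
    {μ : MeasureTheory.Measure ℂ} [IsFiniteMeasure μ] (t : ℂ) {R : ℝ} (hR : 0 < R)
    {ρ : (ℂ → ℝ≥0∞) → ℝ≥0∞} (hρ : IsBFN μ ρ)
    {w : ℂ → ℝ≥0∞} (hw : IsWeight μ w)
    (hwX : ρ w < ⊤) (hwX' : assoc μ ρ (fun x => (w x)⁻¹) < ⊤)
    (hm0 : 0 < μ (portion Γ t R))
    (hRm : ENNReal.ofReal R ≤ μ (portion Γ t R)) :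
    Cq μ ρ (assoc μ ρ) Γ w t R
      ≤ Bwt ρ (assoc μ ρ) Γ w t R * Bwt ρ (assoc μ ρ) Γ (fun _ => 1) t R ∧
    Cq' μ ρ (assoc μ ρ) Γ w t R
      ≤ Bwt ρ (assoc μ ρ) Γ w t R * Bwt ρ (assoc μ ρ) Γ (fun _ => 1) t R := by
  set P := portion Γ t R with hPdef
  have hP : MeasurableSet P := hΓm.inter measurableSet_ball
  set m := μ P with hm
  have hmT : m < ⊤ := measure_lt_top μ P
  set a : ℝ := avg μ Γ (logw w) t R with haa
  set Nw := ρ (P.indicator w) with hNw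
  set Nw' := assoc μ ρ (P.indicator fun x => (w x)⁻¹) with hNw'
  set N1 := ρ (P.indicator 1) with hN1
  set N1' := assoc μ ρ (P.indicator 1) with hN1'
  -- finiteness
  have hNwT : Nw < ⊤ := by
    refine lt_of_le_of_lt (hρ.mono w (P.indicator w) hw.1 (hw.1.indicator hP) ?_) hwX
    exact Filter.Eventually.of_forall fun x => Set.indicator_le_self _ _ x
  have hNw'T : Nw' < ⊤ := by
    refine lt_of_le_of_lt (assoc_mono _ _ fun x => ?_) hwX'
    by_cases hx : x ∈ P <;> simp [Set.indicator_apply, hx]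
  have hN1T : N1 < ⊤ := hρ.indicator_lt_top P hP
  have hN1'T : N1' < ⊤ := assoc_indicator_lt_top hρ P hP
  -- Bwt identities
  have hRne : ENNReal.ofReal R ≠ 0 := by simp [hR, ENNReal.ofReal_eq_zero, not_le]
  have hBw : ENNReal.ofReal R * Bwt ρ (assoc μ ρ) Γ w t R = Nw * Nw' := by
    rw [Bwt, ← mul_assoc, ← mul_assoc, ENNReal.mul_inv_cancel hRne ENNReal.ofReal_ne_top,
      one_mul]
  have h1ind : (P.indicator fun _ : ℂ => (1:ℝ≥0∞)) = P.indicator 1 := rfl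
  have h1inv : (P.indicator fun x : ℂ => ((fun _ : ℂ => (1:ℝ≥0∞)) x)⁻¹) = P.indicator 1 := by
    funext x; by_cases hx : x ∈ P <;> simp [Set.indicator_apply, hx]
  have hB1 : ENNReal.ofReal R * Bwt ρ (assoc μ ρ) Γ (fun _ => 1) t R = N1 * N1' := by
    rw [Bwt, ← hPdef, h1ind, h1inv, ← mul_assoc, ← mul_assoc,
      ENNReal.mul_inv_cancel hRne ENNReal.ofReal_ne_top, one_mul]
  -- one ≤ Cq facts
  obtain ⟨h1Cq, h1Cq'⟩ := one_le_Cq_both hΓm t R hρ hw hwX hwX' hm0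
  have hAle : m ≤ ENNReal.ofReal (Real.exp (-a)) * Nw * N1' := by
    rw [Cq, ENNReal.le_div_iff_mul_le (Or.inl hm0.ne') (Or.inl hmT.ne), one_mul] at h1Cq
    exact h1Cq
  have hBle : m ≤ ENNReal.ofReal (Real.exp a) * N1 * Nw' := by
    rw [Cq', ENNReal.le_div_iff_mul_le (Or.inl hm0.ne') (Or.inl hmT.ne), one_mul] at h1Cq'
    exact h1Cq'
  have hcancel : ENNReal.ofReal (Real.exp (-a)) * ENNReal.ofReal (Real.exp a) = 1 := by
    rw [← ENNReal.ofReal_mul (Real.exp_pos _).le, ← Real.exp_add, neg_add_cancel,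
      Real.exp_zero, ENNReal.ofReal_one]
  set S := Bwt ρ (assoc μ ρ) Γ w t R * Bwt ρ (assoc μ ρ) Γ (fun _ => 1) t R with hS
  have hprod : Nw * Nw' * (N1 * N1') ≤ m * m * S := by
    calc Nw * Nw' * (N1 * N1')
        = (ENNReal.ofReal R * Bwt ρ (assoc μ ρ) Γ w t R)
            * (ENNReal.ofReal R * Bwt ρ (assoc μ ρ) Γ (fun _ => 1) t R) := by
          rw [hBw, hB1]
      _ ≤ (m * Bwt ρ (assoc μ ρ) Γ w t R) * (m * Bwt ρ (assoc μ ρ) Γ (fun _ => 1) t R) :=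
          mul_le_mul' (mul_le_mul_left hRm _) (mul_le_mul_left hRm _)
      _ = m * m * S := by rw [hS]; ring
  constructor
  · rw [Cq, ENNReal.div_le_iff_le_mul (Or.inl hm0.ne') (Or.inl hmT.ne), ← haa,
      ← hPdef, ← hNw, ← hN1']
    have step : (ENNReal.ofReal (Real.exp (-a)) * Nw * N1') * m ≤ (S * m) * m := by
      calc (ENNReal.ofReal (Real.exp (-a)) * Nw * N1') * m
          ≤ (ENNReal.ofReal (Real.exp (-a)) * Nw * N1')
              * (ENNReal.ofReal (Real.exp a) * N1 * Nw') := mul_le_mul_right hBle _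
        _ = (ENNReal.ofReal (Real.exp (-a)) * ENNReal.ofReal (Real.exp a))
              * (Nw * Nw' * (N1 * N1')) := by ring
        _ = Nw * Nw' * (N1 * N1') := by rw [hcancel, one_mul]
        _ ≤ m * m * S := hprod
        _ = (S * m) * m := by ring
    exact (ENNReal.mul_le_mul_iff_left hm0.ne' hmT.ne).mp step
  · rw [Cq', ENNReal.div_le_iff_le_mul (Or.inl hm0.ne') (Or.inl hmT.ne), ← haa,
      ← hPdef, ← hN1, ← hNw']
    have step : (ENNReal.ofReal (Real.exp a) * N1 * Nw') * m ≤ (S * m) * m := by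
      calc (ENNReal.ofReal (Real.exp a) * N1 * Nw') * m
          ≤ (ENNReal.ofReal (Real.exp a) * N1 * Nw')
              * (ENNReal.ofReal (Real.exp (-a)) * Nw * N1') := mul_le_mul_right hAle _
        _ = (ENNReal.ofReal (Real.exp (-a)) * ENNReal.ofReal (Real.exp a))
              * (Nw * Nw' * (N1 * N1')) := by ring
        _ = Nw * Nw' * (N1 * N1') := by rw [hcancel, one_mul]
        _ ≤ m * m * S := hprod
        _ = (S * m) * m := by ring
    exact (ENNReal.mul_le_mul_iff_left hm0.ne' hmT.ne).mp step

end Aux5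


/-- If `w ∈ A_X(Γ,t)` and `1 ∈ A_X(Γ,t)`, then
`1 ≤ sup_{R>0} C(w,t,R) < ∞` and `1 ≤ sup_{R>0} C'(w,t,R) < ∞`. -/
theorem stmt4 (Γ : Set ℂ) (hΓc : IsCompact Γ) (hΓconn : IsConnected Γ)
    (μ : Measure ℂ) (hμ : μ = (μH[1] : Measure ℂ).restrict Γ)
    (hμ0 : 0 < μ Γ) (hμfin : μ Γ < ⊤) (t : ℂ) (ht : t ∈ Γ)
    (ρ : (ℂ → ℝ≥0∞) → ℝ≥0∞) (hρ : IsBFN μ ρ)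
    (w : ℂ → ℝ≥0∞) (hw : IsWeight μ w)
    (hwX : ρ w < ⊤) (hwX' : assoc μ ρ (fun x => (w x)⁻¹) < ⊤)
    (hwA : MemAt ρ (assoc μ ρ) Γ w t)
    (h1A : MemAt ρ (assoc μ ρ) Γ (fun _ => 1) t) :
    (1 ≤ ⨆ (R : ℝ) (_ : 0 < R), Cq μ ρ (assoc μ ρ) Γ w t R) ∧
    ((⨆ (R : ℝ) (_ : 0 < R), Cq μ ρ (assoc μ ρ) Γ w t R) < ⊤) ∧
    (1 ≤ ⨆ (R : ℝ) (_ : 0 < R), Cq' μ ρ (assoc μ ρ) Γ w t R) ∧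
    ((⨆ (R : ℝ) (_ : 0 < R), Cq' μ ρ (assoc μ ρ) Γ w t R) < ⊤) := by
  have hΓm : MeasurableSet Γ := hΓc.measurableSet
  have hμuniv : μ Set.univ = μ Γ := by
    rw [hμ, MeasureTheory.Measure.restrict_apply MeasurableSet.univ,
      MeasureTheory.Measure.restrict_apply hΓm, Set.univ_inter, Set.inter_self]
  haveI : IsFiniteMeasure μ := ⟨by rw [hμuniv]; exact hμfin⟩
  set d := dMax Γ t with hd
  have hd0 : 0 < d := dMax_pos hΓc ht hμ hμ0
  have hm0R : ∀ R : ℝ, 0 < R → 0 < μ (portion Γ t R) := by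
    intro R hR
    refine lt_of_lt_of_le ?_ (measure_portion_ge hΓc hΓconn ht hμ hR)
    exact ENNReal.ofReal_pos.mpr (lt_min hR hd0)
  -- the point R₀ = d + 1, where the portion is all of Γ
  have hR₀ : (0:ℝ) < d + 1 := by linarith
  have hport : ∀ R : ℝ, d < R → portion Γ t R = Γ := fun R hdR => portion_eq_of_lt hΓc hdR
  obtain ⟨h1Cq₀, h1Cq'₀⟩ := one_le_Cq_both hΓm t (d+1) hρ hw hwX hwX' (hm0R _ hR₀)
  -- sup bounds for Bwt
  have hwA' : (⨆ (R : ℝ) (_ : 0 < R), Bwt ρ (assoc μ ρ) Γ w t R) < ⊤ := hwA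
  have h1A' : (⨆ (R : ℝ) (_ : 0 < R), Bwt ρ (assoc μ ρ) Γ (fun _ => 1) t R) < ⊤ := h1A
  set K1 := (⨆ (R : ℝ) (_ : 0 < R), Bwt ρ (assoc μ ρ) Γ w t R)
    * (⨆ (R : ℝ) (_ : 0 < R), Bwt ρ (assoc μ ρ) Γ (fun _ => 1) t R) with hK1
  have hK1T : K1 < ⊤ := ENNReal.mul_lt_top hwA' h1A'
  -- constancy of Cq, Cq' for R > d
  have hCqconst : ∀ R : ℝ, d < R →
      Cq μ ρ (assoc μ ρ) Γ w t R = Cq μ ρ (assoc μ ρ) Γ w t (d+1) := by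
    intro R hdR
    simp only [Cq, avg, hport R hdR, hport (d+1) (by linarith)]
  have hCq'const : ∀ R : ℝ, d < R →
      Cq' μ ρ (assoc μ ρ) Γ w t R = Cq' μ ρ (assoc μ ρ) Γ w t (d+1) := by
    intro R hdR
    simp only [Cq', avg, hport R hdR, hport (d+1) (by linarith)]
  -- finiteness of the norm quantities at R = d + 1
  have hP₁ : MeasurableSet (portion Γ t (d+1)) := hΓm.inter measurableSet_ball
  have hNwT : ρ ((portion Γ t (d+1)).indicator w) < ⊤ := by
    refine lt_of_le_of_lt (hρ.mono w _ hw.1 (hw.1.indicator hP₁) ?_) hwX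
    exact Filter.Eventually.of_forall fun x => Set.indicator_le_self _ _ x
  have hNw'T : assoc μ ρ ((portion Γ t (d+1)).indicator fun x => (w x)⁻¹) < ⊤ := by
    refine lt_of_le_of_lt (assoc_mono _ _ fun x => ?_) hwX'
    by_cases hx : x ∈ portion Γ t (d+1) <;> simp [Set.indicator_apply, hx]
  have hN1T : ρ ((portion Γ t (d+1)).indicator 1) < ⊤ := hρ.indicator_lt_top _ hP₁
  have hN1'T : assoc μ ρ ((portion Γ t (d+1)).indicator 1) < ⊤ :=
    assoc_indicator_lt_top hρ _ hP₁
  have hK2T : Cq μ ρ (assoc μ ρ) Γ w t (d+1) < ⊤ := by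
    rw [Cq]
    refine ENNReal.div_lt_top ?_ (hm0R _ hR₀).ne'
    exact (ENNReal.mul_lt_top (ENNReal.mul_lt_top ENNReal.ofReal_lt_top hNwT) hN1'T).ne
  have hK2'T : Cq' μ ρ (assoc μ ρ) Γ w t (d+1) < ⊤ := by
    rw [Cq']
    refine ENNReal.div_lt_top ?_ (hm0R _ hR₀).ne'
    exact (ENNReal.mul_lt_top (ENNReal.mul_lt_top ENNReal.ofReal_lt_top hN1T) hNw'T).ne
  -- per-R upper bound helper
  have hub : ∀ R : ℝ, 0 < R → R ≤ d →
      Cq μ ρ (assoc μ ρ) Γ w t R ≤ K1 ∧ Cq' μ ρ (assoc μ ρ) Γ w t R ≤ K1 := by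
    intro R hR hRd
    have hRm : ENNReal.ofReal R ≤ μ (portion Γ t R) := by
      have := measure_portion_ge hΓc hΓconn ht hμ hR
      rwa [min_eq_left hRd] at this
    obtain ⟨hc, hc'⟩ := Cq_le_prod hΓm t hR hρ hw hwX hwX' (hm0R R hR) hRm
    have hle : Bwt ρ (assoc μ ρ) Γ w t R * Bwt ρ (assoc μ ρ) Γ (fun _ => 1) t R ≤ K1 := by
      rw [hK1]
      exact mul_le_mul' (le_iSup_of_le R (by rw [iSup_pos hR]))
        (le_iSup_of_le R (by rw [iSup_pos hR]))
    exact ⟨le_trans hc hle, le_trans hc' hle⟩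
  refine ⟨?_, ?_, ?_, ?_⟩
  · exact le_trans h1Cq₀ (le_iSup_of_le (d+1) (by rw [iSup_pos hR₀]))
  · refine lt_of_le_of_lt (iSup_le fun R => iSup_le fun hR => ?_)
      (sup_lt_iff.mpr ⟨hK1T, hK2T⟩ :
        K1 ⊔ Cq μ ρ (assoc μ ρ) Γ w t (d+1) < ⊤)
    rcases le_or_gt R d with hRd | hRd
    · exact le_sup_of_le_left (hub R hR hRd).1
    · rw [hCqconst R hRd]; exact le_sup_right
  · exact le_trans h1Cq'₀ (le_iSup_of_le (d+1) (by rw [iSup_pos hR₀]))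
  · refine lt_of_le_of_lt (iSup_le fun R => iSup_le fun hR => ?_)
      (sup_lt_iff.mpr ⟨hK1T, hK2'T⟩ :
        K1 ⊔ Cq' μ ρ (assoc μ ρ) Γ w t (d+1) < ⊤)
    rcases le_or_gt R d with hRd | hRd
    · exact le_sup_of_le_left (hub R hR hRd).2
    · rw [hCq'const R hRd]; exact le_sup_right
end
end

section
/- Let Γ be locally a Carleson curve at t ∈ Γ and let p ∈ P_t. Then there exist constants M₁(t), M₂(t), C₁(t), C₂(t) ∈ (0,∞) such that ‖χ_{Δ(t,R)}‖_{p(·)} ≥ M₁(t)·R^{1/p(t)} for all R ∈ (0,C₁(t)) and ‖χ_{Γ(t,R)}‖_{p(·)} ≤ M₂(t)·R^{1/p(t)} for all R ∈ (0,C₂(t)). -/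
open MeasureTheory Filter Set Topology
open scoped ENNReal NNReal

noncomputable section

namespace SIOAux

lemma low_ineq (q A L δ a : ℝ) (hq : 1 < q) (hA : 0 < A) (hL : 0 < L)
    (hδ : δ * L = A) (hδ0 : 0 < δ) (hδq : δ < q - 1)
    (ha : a = q + δ ∨ a = q - δ) :
    -(A + q * Real.log 2) + -L * (1 / q) ≤ (-L - Real.log 2) * (1 / a) := by
  have hc : (0:ℝ) < Real.log 2 := Real.log_pos one_lt_two
  set c := Real.log 2
  have hq0 : (0:ℝ) < q := by linarith
  have ha0 : 0 < a := by rcases ha with rfl | rfl <;> linarith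
  rw [mul_one_div, mul_one_div]
  have h1 : -(A + q * c) + -L / q = (-(A + q * c) * q - L) / q := by field_simp; ring
  rw [h1, div_le_div_iff₀ hq0 ha0]
  rcases ha with rfl | rfl
  · nlinarith [mul_pos hA hq0, mul_pos (mul_pos hA hq0) hq0, mul_pos hc hq0,
      mul_nonneg (mul_nonneg hc.le hq0.le) (mul_pos hq0 hq0).le,
      mul_pos (mul_pos hA hq0) hδ0, mul_nonneg (mul_nonneg hc.le hq0.le) (mul_pos hq0 hδ0).le,
      mul_le_mul_of_nonneg_left hδq.le (mul_pos hA hq0).le,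
      mul_le_mul_of_nonneg_left hδq.le (mul_pos (mul_pos hc hq0) hq0).le]
  · nlinarith [mul_pos hA hq0, mul_pos (mul_pos hA hq0) hq0, mul_pos hc hq0,
      mul_le_mul_of_nonneg_left hδq.le (mul_pos hA hq0).le,
      mul_le_mul_of_nonneg_left hδq.le (mul_pos (mul_pos hc hq0) hq0).le]

lemma up_ineq (q A L δ px m : ℝ) (hq : 1 < q) (hA : 0 < A) (hL : 0 < L)
    (hδ : δ * L = A) (hδ0 : 0 < δ) (hpx1 : 1 ≤ px) (hpxu : px ≤ q + δ) (hm : 0 ≤ m) :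
    -(px * (m + -L * (1 / q))) ≤ A * (1 / q) - m + L := by
  have hq0 : (0:ℝ) < q := by linarith
  have hu0 : 0 < L * (1 / q) := by positivity
  have hqu : q * (L * (1 / q)) = L := by field_simp
  have hδu : δ * (L * (1 / q)) = A * (1 / q) := by
    field_simp
    nlinarith [hδ]
  nlinarith [mul_le_mul_of_nonneg_right hpxu hu0.le, mul_le_mul_of_nonneg_right hpx1 hm]

lemma ann_meas (Γ : Set ℂ) (hΓconn : IsConnected Γ) (t : ℂ) (ht : t ∈ Γ)
    {R d : ℝ} (hR : 0 < R) (hd : d ∈ (fun τ => dist τ t) '' Γ) (hRd : R ≤ d) :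
    ENNReal.ofReal (R / 2) ≤ μH[1] ((Γ ∩ Metric.ball t R) \ (Γ ∩ Metric.ball t (R / 2))) := by
  have hcont : Continuous fun τ : ℂ => dist τ t := continuous_id.dist continuous_const
  have hIcc : Icc 0 d ⊆ (fun τ => dist τ t) '' Γ :=
    (hΓconn.isPreconnected.image _ hcont.continuousOn).Icc_subset
      ⟨t, ht, dist_self t⟩ hd
  have hIco : Ico (R / 2) R ⊆
      (fun τ => dist τ t) '' ((Γ ∩ Metric.ball t R) \ (Γ ∩ Metric.ball t (R / 2))) := by
    rintro r ⟨hr1, hr2⟩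
    obtain ⟨τ, hτΓ, hτr⟩ := hIcc ⟨by linarith, hr2.le.trans hRd⟩
    simp only at hτr
    refine ⟨τ, ⟨⟨hτΓ, ?_⟩, fun h => ?_⟩, hτr⟩
    · simp only [Metric.mem_ball]; rw [hτr]; exact hr2
    · have := h.2
      rw [Metric.mem_ball, hτr] at this
      linarith
  calc ENNReal.ofReal (R / 2) = μH[1] (Ico (R / 2) R) := by
        rw [MeasureTheory.hausdorffMeasure_real, Real.volume_Ico]; congr 1; ring
    _ ≤ μH[1] ((fun τ => dist τ t) '' ((Γ ∩ Metric.ball t R) \ (Γ ∩ Metric.ball t (R / 2)))) :=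
        measure_mono hIco
    _ ≤ μH[1] ((Γ ∩ Metric.ball t R) \ (Γ ∩ Metric.ball t (R / 2))) := by
        simpa using (LipschitzWith.dist_left t).hausdorffMeasure_image_le zero_le_one _

end SIOAux

open SIO SIOAux

/-- If `Γ` is locally Carleson at `t` and `p ∈ P_t`, then there exist
`M₁(t), M₂(t), C₁(t), C₂(t) ∈ (0,∞)` with
`‖χ_{Δ(t,R)}‖_{p(·)} ≥ M₁·R^{1/p(t)}` for `R ∈ (0,C₁)` and
`‖χ_{Γ(t,R)}‖_{p(·)} ≤ M₂·R^{1/p(t)}` for `R ∈ (0,C₂)`. -/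
theorem stmt13 (Γ : Set ℂ) (hΓc : IsCompact Γ) (hΓconn : IsConnected Γ)
    (μ : Measure ℂ) (hμ : μ = (μH[1] : Measure ℂ).restrict Γ)
    (hμ0 : 0 < μ Γ) (hμfin : μ Γ < ⊤) (t : ℂ) (ht : t ∈ Γ)
    (hCarl : LocCarleson μ Γ t)
    (p : ℂ → ℝ) (hpcont : ContinuousOn p Γ) (hpgt : ∀ τ ∈ Γ, 1 < p τ)
    (hPt : ClassPt Γ p t) :
    ∃ M₁ M₂ C₁ C₂ : ℝ, 0 < M₁ ∧ 0 < M₂ ∧ 0 < C₁ ∧ 0 < C₂ ∧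
      (∀ R : ℝ, 0 < R → R < C₁ →
        ENNReal.ofReal (M₁ * R ^ (1 / p t)) ≤
          nakanoNorm μ p ((annulus Γ t R).indicator 1)) ∧
      (∀ R : ℝ, 0 < R → R < C₂ →
        nakanoNorm μ p ((portion Γ t R).indicator 1) ≤
          ENNReal.ofReal (M₂ * R ^ (1 / p t))) := by

  classical
  subst hμ
  obtain ⟨A, hA, hPtA⟩ := hPt
  have hq : 1 < p t := hpgt t ht
  have hq0 : (0:ℝ) < p t := by linarith
  have hΓm : MeasurableSet Γ := hΓc.measurableSet
  -- Carleson bound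
  have hport : ∃ cγ : ℝ, 0 < cγ ∧ ∀ R : ℝ, 0 < R →
      (μH[1] : Measure ℂ).restrict Γ (portion Γ t R) ≤ ENNReal.ofReal (cγ * R) := by
    refine ⟨(⨆ (R : ℝ) (_ : 0 < R), (μH[1] : Measure ℂ).restrict Γ (portion Γ t R) / ENNReal.ofReal R).toReal + 1,
      by positivity, fun R hR => ?_⟩
    set S := ⨆ (R : ℝ) (_ : 0 < R), (μH[1] : Measure ℂ).restrict Γ (portion Γ t R) / ENNReal.ofReal R with hSdef
    have hS : S < ⊤ := hCarl
    have h0R : ENNReal.ofReal R ≠ 0 := by simp [hR]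
    have hle : (μH[1] : Measure ℂ).restrict Γ (portion Γ t R) / ENNReal.ofReal R ≤ S := by
      refine le_iSup_of_le R ?_
      exact le_iSup_of_le hR le_rfl
    calc (μH[1] : Measure ℂ).restrict Γ (portion Γ t R) = (μH[1] : Measure ℂ).restrict Γ (portion Γ t R) / ENNReal.ofReal R * ENNReal.ofReal R := by
          rw [ENNReal.div_mul_cancel h0R ENNReal.ofReal_ne_top]
      _ ≤ S * ENNReal.ofReal R := mul_le_mul_left hle _
      _ ≤ ENNReal.ofReal (S.toReal + 1) * ENNReal.ofReal R := by
          refine mul_le_mul_left ?_ _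
          calc S = ENNReal.ofReal S.toReal := (ENNReal.ofReal_toReal hS.ne).symm
            _ ≤ ENNReal.ofReal (S.toReal + 1) := ENNReal.ofReal_le_ofReal (by linarith)
      _ = ENNReal.ofReal ((S.toReal + 1) * R) := by
          rw [ENNReal.ofReal_mul (by positivity)]
  obtain ⟨cγ, hcγ, hport⟩ := hport
  -- the maximal distance
  have hdmax : ∃ d : ℝ, 0 < d ∧ d ∈ (fun τ => dist τ t) '' Γ := by
    have hcont : Continuous fun τ : ℂ => dist τ t := continuous_id.dist continuous_const
    have him : IsCompact ((fun τ => dist τ t) '' Γ) := hΓc.image hcont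
    have hne : ((fun τ => dist τ t) '' Γ).Nonempty := ⟨dist t t, mem_image_of_mem _ ht⟩
    refine ⟨sSup ((fun τ => dist τ t) '' Γ), ?_, him.sSup_mem hne⟩
    by_contra h
    push_neg at h
    have hsub : Γ ⊆ {t} := by
      intro τ hτ
      have h1 : dist τ t ≤ sSup ((fun τ => dist τ t) '' Γ) :=
        le_csSup him.bddAbove (mem_image_of_mem _ hτ)
      have h2 : dist τ t = 0 := le_antisymm (h1.trans h) dist_nonneg
      simpa using dist_eq_zero.mp h2
    have : (μH[1] : Measure ℂ).restrict Γ Γ = 0 := by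
      haveI := MeasureTheory.Measure.noAtoms_hausdorff ℂ one_pos
      refine le_antisymm ?_ zero_le
      calc (μH[1] : Measure ℂ).restrict Γ Γ ≤ μH[1] Γ := Measure.restrict_apply_le _ _
        _ ≤ μH[1] {t} := measure_mono hsub
        _ = 0 := measure_singleton t
    rw [this] at hμ0
    exact lt_irrefl _ hμ0
  obtain ⟨d, hd0, hdmem⟩ := hdmax
  set q := p t with hqdef
  set M₁ : ℝ := Real.exp (-(A + q * Real.log 2)) with hM₁def
  set M₂ : ℝ := max 1 (cγ * Real.exp (A * (1 / q))) with hM₂def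
  set C₂ : ℝ := min (1 / 2) (Real.exp (-(A / (q - 1)) - 1)) with hC₂def
  set C₁ : ℝ := min C₂ d with hC₁def
  have hM₁ : 0 < M₁ := Real.exp_pos _
  have hM₂ : 0 < M₂ := lt_max_iff.2 (Or.inl one_pos)
  have hC₂ : 0 < C₂ := lt_min (by norm_num) (Real.exp_pos _)
  have hC₁ : 0 < C₁ := lt_min hC₂ hd0
  -- common estimates for R < C₂
  have hcommon : ∀ R : ℝ, 0 < R → R < C₂ →
      0 < -Real.log R ∧ A / (q - 1) + 1 < -Real.log R ∧
      (0 < A / (-Real.log R) ∧ A / (-Real.log R) * (-Real.log R) = A ∧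
        A / (-Real.log R) < q - 1) ∧
      ∀ x ∈ portion Γ t R, |p x - q| ≤ A / (-Real.log R) := by
    intro R hR hRC
    have hq1 : (0:ℝ) < q - 1 := by linarith
    have hRhalf : R < 1 / 2 := lt_of_lt_of_le hRC (min_le_left _ _)
    have hRexp : R < Real.exp (-(A / (q - 1)) - 1) := lt_of_lt_of_le hRC (min_le_right _ _)
    have hlog : Real.log R < -(A / (q - 1)) - 1 := by
      calc Real.log R < Real.log (Real.exp (-(A / (q - 1)) - 1)) := Real.log_lt_log hR hRexp
        _ = -(A / (q - 1)) - 1 := Real.log_exp _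
    have hLgt : A / (q - 1) + 1 < -Real.log R := by linarith
    have hAq1 : 0 < A / (q - 1) := by positivity
    have hL0 : 0 < -Real.log R := by linarith
    refine ⟨hL0, hLgt, ⟨by positivity, div_mul_cancel₀ _ hL0.ne', ?_⟩, ?_⟩
    · rw [div_lt_iff₀ hL0]
      calc A = A / (q - 1) * (q - 1) := (div_mul_cancel₀ _ hq1.ne').symm
        _ < -Real.log R * (q - 1) := by
            apply mul_lt_mul_of_pos_right _ hq1
            linarith
        _ = (q - 1) * -Real.log R := by ring
    · intro x hx
      have hxΓ : x ∈ Γ := hx.1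
      have hxball : dist x t < R := by simpa [Metric.mem_ball] using hx.2
      have hxhalf : dist x t ≤ 1 / 2 := by linarith
      have hbase := hPtA x hxΓ hxhalf
      rcases eq_or_lt_of_le (dist_nonneg : (0:ℝ) ≤ dist x t) with h0 | h0
      · have : x = t := dist_eq_zero.mp h0.symm
        rw [this]
        simp only [sub_self, abs_zero, hqdef]
        positivity
      · refine hbase.trans ?_
        have hlt : Real.log (dist x t) < Real.log R := Real.log_lt_log h0 hxball
        have : -Real.log R ≤ -Real.log (dist x t) := by linarith
        exact div_le_div_of_nonneg_left hA.le hL0 this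
  refine ⟨M₁, M₂, C₁, C₂, hM₁, hM₂, hC₁, hC₂, ?_, ?_⟩
  · -- lower bound
    intro R hR hRC
    have hRC₂ : R < C₂ := lt_of_lt_of_le hRC (min_le_left _ _)
    have hRd : R ≤ d := le_of_lt (lt_of_lt_of_le hRC (min_le_right _ _))
    obtain ⟨hL0, hLgt, ⟨hδ0, hδL, hδq⟩, hpx⟩ := hcommon R hR hRC₂
    set L : ℝ := -Real.log R with hLdef
    set δ : ℝ := A / L with hδdef
    have hRhalf0 : (0:ℝ) < R / 2 := by linarith
    set Δ := annulus Γ t R with hΔdef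
    have hΔsub : Δ ⊆ Γ := fun x hx => hx.1.1
    have hΔm : MeasurableSet Δ :=
      (hΓm.inter measurableSet_ball).diff (hΓm.inter measurableSet_ball)
    have hΔsubP : Δ ⊆ portion Γ t R := fun x hx => hx.1
    have hΔμ : ENNReal.ofReal (R / 2) ≤ (μH[1] : Measure ℂ).restrict Γ Δ := by
      rw [Measure.restrict_apply' hΓm, inter_eq_self_of_subset_left hΔsub]
      exact ann_meas Γ hΓconn t ht hR hdmem hRd
    apply le_sInf
    rintro lam ⟨hlam0, hmod⟩
    rcases eq_or_ne lam ⊤ with rfl | hlamtop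
    · exact le_top
    set l : ℝ := lam.toReal with hldef
    have hl0 : 0 < l := ENNReal.toReal_pos hlam0.ne' hlamtop
    have hlameq : lam = ENNReal.ofReal l := (ENNReal.ofReal_toReal hlamtop).symm
    obtain ⟨a, haor, ha1, hpoint⟩ : ∃ a : ℝ, (a = q + δ ∨ a = q - δ) ∧ 1 ≤ a ∧
        ∀ x ∈ Δ, ENNReal.ofReal (l ^ (-a)) ≤ (Δ.indicator 1 x / lam) ^ (p x) := by
      have hcomm : ∀ x ∈ Δ, ∀ b : ℝ, l ^ (-b) ≤ l ^ (-(p x)) →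
          ENNReal.ofReal (l ^ (-b)) ≤ (Δ.indicator 1 x / lam) ^ (p x) := by
        intro x hx b hb
        rw [Set.indicator_of_mem hx, Pi.one_apply, hlameq]
        have h1 : (1 : ℝ≥0∞) / ENNReal.ofReal l = ENNReal.ofReal l⁻¹ := by
          rw [one_div, ← ENNReal.ofReal_inv_of_pos hl0]
        rw [h1, ENNReal.ofReal_rpow_of_pos (inv_pos.2 hl0)]
        apply ENNReal.ofReal_le_ofReal
        rwa [Real.inv_rpow hl0.le, ← Real.rpow_neg hl0.le]
      rcases le_total 1 l with hl1 | hl1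
      · refine ⟨q + δ, Or.inl rfl, by linarith, fun x hx => hcomm x hx _ ?_⟩
        have hpxu : p x ≤ q + δ := by
          have := abs_le.mp (hpx x (hΔsubP hx))
          linarith [this.2]
        exact Real.rpow_le_rpow_of_exponent_le hl1 (by linarith)
      · refine ⟨q - δ, Or.inr rfl, by linarith, fun x hx => hcomm x hx _ ?_⟩
        have hpxl : q - δ ≤ p x := by
          have := abs_le.mp (hpx x (hΔsubP hx))
          linarith [this.1]
        exact Real.rpow_le_rpow_of_exponent_ge hl0 hl1 (by linarith)
    have ha0 : (0:ℝ) < a := lt_of_lt_of_le one_pos ha1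
    have key : ENNReal.ofReal (l ^ (-a) * (R / 2)) ≤ 1 := by
      calc ENNReal.ofReal (l ^ (-a) * (R / 2))
          = ENNReal.ofReal (l ^ (-a)) * ENNReal.ofReal (R / 2) :=
            ENNReal.ofReal_mul (Real.rpow_pos_of_pos hl0 _).le
        _ ≤ ENNReal.ofReal (l ^ (-a)) * (μH[1] : Measure ℂ).restrict Γ Δ :=
            mul_le_mul_right hΔμ _
        _ = ∫⁻ _ in Δ, ENNReal.ofReal (l ^ (-a)) ∂((μH[1] : Measure ℂ).restrict Γ) :=
            (setLIntegral_const _ _).symm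
        _ ≤ ∫⁻ x in Δ, (Δ.indicator 1 x / lam) ^ (p x) ∂((μH[1] : Measure ℂ).restrict Γ) :=
            setLIntegral_mono' hΔm hpoint
        _ ≤ ∫⁻ x, (Δ.indicator 1 x / lam) ^ (p x) ∂((μH[1] : Measure ℂ).restrict Γ) :=
            setLIntegral_le_lintegral _ _
        _ ≤ 1 := hmod
    have hreal : l ^ (-a) * (R / 2) ≤ 1 := ENNReal.ofReal_le_one.mp key
    have hla : R / 2 ≤ l ^ a := by
      have hpa : 0 < l ^ a := Real.rpow_pos_of_pos hl0 a
      rw [Real.rpow_neg hl0.le] at hreal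
      nlinarith [mul_inv_cancel₀ hpa.ne']
    have hfin : M₁ * R ^ (1 / q) ≤ l := by
      have h2 : (R / 2) ^ (1 / a) ≤ l := by
        calc (R / 2) ^ (1 / a) ≤ (l ^ a) ^ (1 / a) :=
              Real.rpow_le_rpow hRhalf0.le hla (by positivity)
          _ = l := by rw [← Real.rpow_mul hl0.le, mul_one_div, div_self ha0.ne', Real.rpow_one]
      refine le_trans ?_ h2
      have hlogR : Real.log R = -L := by simp [hLdef]
      rw [hM₁def, Real.rpow_def_of_pos hR, Real.rpow_def_of_pos hRhalf0,
        ← Real.exp_add, Real.log_div hR.ne' two_ne_zero, hlogR]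
      apply Real.exp_le_exp.2
      have := low_ineq q A L δ a hq hA hL0 hδL hδ0 hδq haor
      linarith [this]
    calc ENNReal.ofReal (M₁ * R ^ (1 / q)) ≤ ENNReal.ofReal l := ENNReal.ofReal_le_ofReal hfin
      _ = lam := ENNReal.ofReal_toReal hlamtop

  · -- upper bound
    intro R hR hRC₂
    obtain ⟨hL0, hLgt, ⟨hδ0, hδL, hδq⟩, hpx⟩ := hcommon R hR hRC₂
    set L : ℝ := -Real.log R with hLdef
    set δ : ℝ := A / L with hδdef
    have hR1q : (0:ℝ) < R ^ (1 / q) := Real.rpow_pos_of_pos hR _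
    set l : ℝ := M₂ * R ^ (1 / q) with hldef
    have hl0 : 0 < l := by positivity
    have hm0 : 0 ≤ Real.log M₂ := Real.log_nonneg (le_max_left _ _)
    have hlogR : Real.log R = -L := by simp [hLdef]
    have hpm : MeasurableSet (portion Γ t R) := hΓm.inter measurableSet_ball
    have hMR : (0:ℝ) < M₂ * R := by positivity
    set c : ℝ := Real.exp (A * (1 / q)) * (1 / (M₂ * R)) with hcdef
    have hc0 : 0 < c := by positivity
    have hmod : ∫⁻ x, ((portion Γ t R).indicator 1 x / ENNReal.ofReal l) ^ (p x)
        ∂((μH[1] : Measure ℂ).restrict Γ) ≤ 1 := by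
      calc ∫⁻ x, ((portion Γ t R).indicator 1 x / ENNReal.ofReal l) ^ (p x)
            ∂((μH[1] : Measure ℂ).restrict Γ)
          ≤ ∫⁻ x in Γ, (portion Γ t R).indicator (fun _ => ENNReal.ofReal c) x ∂(μH[1]) := by
            apply setLIntegral_mono' hΓm
            intro x hxΓ
            by_cases hxp : x ∈ portion Γ t R
            · rw [Set.indicator_of_mem hxp, Set.indicator_of_mem hxp, Pi.one_apply]
              have h1 : (1 : ℝ≥0∞) / ENNReal.ofReal l = ENNReal.ofReal l⁻¹ := by
                rw [one_div, ← ENNReal.ofReal_inv_of_pos hl0]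
              rw [h1, ENNReal.ofReal_rpow_of_pos (inv_pos.2 hl0)]
              apply ENNReal.ofReal_le_ofReal
              have hpx1 : 1 ≤ p x := (hpgt x hxΓ).le
              have hpxu : p x ≤ q + δ := by
                have := abs_le.mp (hpx x hxp)
                linarith [this.2]
              have hlogl : Real.log l = Real.log M₂ + -L * (1 / q) := by
                rw [hldef, Real.log_mul hM₂.ne' hR1q.ne', Real.log_rpow hR, hlogR]
                ring
              rw [Real.inv_rpow hl0.le, ← Real.rpow_neg hl0.le,
                Real.rpow_def_of_pos hl0, hcdef, one_div (M₂ * R), ← Real.exp_log (inv_pos.2 hMR),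
                ← Real.exp_add, Real.log_inv, Real.log_mul hM₂.ne' hR.ne', hlogR]
              apply Real.exp_le_exp.2
              have := up_ineq q A L δ (p x) (Real.log M₂) hq hA hL0 hδL hδ0 hpx1 hpxu hm0
              rw [hlogl]
              linarith [this]
            · rw [Set.indicator_of_notMem hxp, Set.indicator_of_notMem hxp,
                ENNReal.zero_div, ENNReal.zero_rpow_of_pos (lt_trans one_pos (hpgt x hxΓ))]
        _ = ENNReal.ofReal c * ((μH[1] : Measure ℂ).restrict Γ) (portion Γ t R) := by
            rw [lintegral_indicator hpm, setLIntegral_const]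
        _ ≤ ENNReal.ofReal c * ENNReal.ofReal (cγ * R) := mul_le_mul_right (hport R hR) _
        _ = ENNReal.ofReal (c * (cγ * R)) := (ENNReal.ofReal_mul hc0.le).symm
        _ ≤ 1 := by
            apply ENNReal.ofReal_le_one.2
            have heq : c * (cγ * R) = cγ * Real.exp (A * (1 / q)) / M₂ := by
              rw [hcdef]; field_simp
            rw [heq, div_le_one hM₂]
            exact le_max_right _ _
    exact sInf_le ⟨ENNReal.ofReal_pos.2 hl0, hmod⟩
end
end
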